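/- Let J be a 2-torsion free and (n−1)-torsion free Jordan ring with nontrivial idempotent e satisfying conditions (i)–(iii), and D : J → J an n-multiplicative derivation with D(e) = 0. Then D is additive on J_{1/2}: D(a + b) = D(a) + D(b) for all a, b ∈ J_{1/2}. -/

import Mathlib

/-- Peirce 1-component relative to `e`: elements `x` with `e*x = x`. -/
def peirce1 {J : Type*} [Mul J] (e : J) : Set J := {x | e * x = x}

/-- Peirce 1/2-component relative to `e`: elements `x` with `e*x = (1/2)x`, i.e. `e*x + e*x = x`. -/
def peirceHalf {J : Type*} [Mul J] [Add J] (e : J) : Set J := {x | e * x + e * x = x}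

/-- Peirce 0-component relative to `e`: elements `x` with `e*x = 0`. -/
def peirce0 {J : Type*} [Mul J] [Zero J] (e : J) : Set J := {x | e * x = 0}

/-- The right-normed nonassociative monomial `x₁(x₂(⋯(x_{n-1}x_n)⋯))` on a list of arguments. -/
def rnm {J : Type*} [Mul J] [Zero J] : List J → J
  | [] => 0
  | [x] => x
  | x :: y :: l => x * rnm (y :: l)

/-- `d` is an `n`-multiplicative derivation (w.r.t. the right-normed monomial of degree `n`):
`d(m(x₁,…,xₙ)) = Σᵢ m(x₁,…,d(xᵢ),…,xₙ)`. -/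
def IsNDer {J : Type*} [NonUnitalNonAssocRing J] (n : ℕ) (d : J → J) : Prop :=
  ∀ l : List J, l.length = n →
    d (rnm l) = ∑ i ∈ Finset.range n, rnm (l.set i (d (l.getD i 0)))

/-!
Everything runs through the additivity defect `Δ(x, y) = D (x + y) - D x - D y`. Since
`x₁(x₂(⋯(x_{n-1} x)⋯))` is additive in `x`, the derivation identity gives `Δ(t·x, t·y) = t·Δ(x, y)`
for every chain `t·z = t₁(t₂(⋯(t_{n-1} z)⋯))`. Hence a chain `I` which kills `x` also kills
`Δ(x, y)`: after prefixing `I` by any `W` of suitable length, `W·I·Δ(x, y) = Δ(0, W·I·y) = 0`,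
and by (ii) an element killed by all chains of a fixed length is `0`. Together with the Peirce
multiplication rules and the integral Peirce decomposition `x = P₁x + P_{1/2}x + P₀x`, conditions
(i)–(iii) then force `D` to be additive on sums `u + v + q` with `u ∈ J₁`, `v ∈ J₀`, `q ∈ J_{1/2}`.

For `a, b ∈ J_{1/2}` put `f = 2e`. The elements `f`, `b`, `f + b` lie in the image of
`L_e^{n-2}`, where `D` obeys the Leibniz rule, so the second difference
`D((f+a)(f+b)) - D((f+a)f) - D(f(f+b)) + D(f²)` equals `D(ab)`; splitting `ab` into its `J₁` and
`J₀` parts and using the additivity above turns this into `Δ(a, b) = -Δ(f², e(ab))`. The left side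
lies in `J_{1/2}` (`Δ` commutes with the chain `(2e)^{n-1}`, which fixes `J_{1/2}`), the right side
is annihilated by `J₀`, so both vanish by (iii).
-/

section

variable {J : Type*}

section Membership
variable {e x : J}

@[simp] lemma mem_peirce1 [Mul J] : x ∈ peirce1 e ↔ e * x = x := Iff.rfl

@[simp] lemma mem_peirceHalf [Mul J] [Add J] : x ∈ peirceHalf e ↔ e * x + e * x = x := Iff.rfl

@[simp] lemma mem_peirce0 [Mul J] [Zero J] : x ∈ peirce0 e ↔ e * x = 0 := Iff.rfl

end Membership

/-- Conditions (i)–(iii) of the paper are `MulSeparates (peirceHalf e) (peirce1 e)`,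
`MulSeparates (peirceHalf e) (peirce0 e)`, `MulSeparates (peirce0 e) (peirce0 e)` and
`MulSeparates (peirce0 e) (peirceHalf e)`. -/
def MulSeparates [Mul J] [Zero J] (S T : Set J) : Prop :=
  ∀ a ∈ T, (∀ t ∈ S, t * a = 0) → a = 0

section Peirce
variable [NonUnitalNonAssocCommRing J] {e : J}

lemma add_mem_peirce1 {u u' : J} (hu : u ∈ peirce1 e) (hu' : u' ∈ peirce1 e) :
    u + u' ∈ peirce1 e := by
  rw [mem_peirce1, mul_add, hu, hu']

lemma add_mem_peirceHalf {p q : J} (hp : p ∈ peirceHalf e) (hq : q ∈ peirceHalf e) :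
    p + q ∈ peirceHalf e := by
  rw [mem_peirceHalf] at *
  rw [mul_add, add_add_add_comm, hp, hq]

lemma mul_mem_peirceHalf {q : J} (hq : q ∈ peirceHalf e) : e * q ∈ peirceHalf e := by
  rw [mem_peirceHalf, ← mul_add, hq]

lemma add_self_mul_of_mem_peirceHalf {q : J} (hq : q ∈ peirceHalf e) : (e + e) * q = q := by
  rw [add_mul, hq]

-- The Peirce projections `L(2L - 1)`, `4L(1 - L)`, `(1 - L)(1 - 2L)` for `L = L_e`.
def peirceProj1 (e x : J) : J := 2 • (e * (e * x)) - e * x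

def peirceProjHalf (e x : J) : J := 4 • (e * x - e * (e * x))

def peirceProj0 (e x : J) : J := x - 3 • (e * x) + 2 • (e * (e * x))

lemma peirceProj1_add_peirceProjHalf_add_peirceProj0 (e x : J) :
    peirceProj1 e x + peirceProjHalf e x + peirceProj0 e x = x := by
  simp only [peirceProj1, peirceProjHalf, peirceProj0]
  abel

end Peirce

section Jordan
variable [NonUnitalNonAssocCommRing J] [IsCommJordan J] {e : J}

lemma jordan_identity (x y : J) : x * x * y * x = x * x * (y * x) := by
  rw [mul_comm _ x, mul_comm _ y, ← IsCommJordan.lmul_comm_rmul_rmul, mul_comm (x * y),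
    mul_comm y x]

lemma jordan_linearized (h2 : IsSMulRegular J 2) (x t y : J) :
    x * x * y * t + 2 • (x * t * y * x) = x * x * (y * t) + 2 • (x * t * (y * x)) := by
  apply h2
  -- (identity at `x + t`) - (identity at `x - t`) - 2 (identity at `t`) is twice the claim
  have key : (x + t) * (x + t) * y * (x + t) - (x - t) * (x - t) * y * (x - t)
        - 2 • (t * t * y * t)
      = (x + t) * (x + t) * (y * (x + t)) - (x - t) * (x - t) * (y * (x - t))
        - 2 • (t * t * (y * t)) := by
    rw [jordan_identity, jordan_identity, jordan_identity]
  simp only [add_mul, mul_add, sub_mul, mul_sub, mul_comm t x, smul_add] at key ⊢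
  linear_combination (norm := module) key

variable (h2 : IsSMulRegular J 2) (he : IsIdempotentElem e)
include h2 he

lemma mul_assoc_of_mem_peirce0 {v : J} (hv : v ∈ peirce0 e) (y : J) :
    e * y * v = e * (y * v) := by
  have h := jordan_linearized h2 e v y
  simpa only [he.eq, mem_peirce0.1 hv, zero_mul, smul_zero, add_zero] using h

lemma mul_left_comm_of_mem_peirce1 {u : J} (hu : u ∈ peirce1 e) (y : J) :
    e * (u * y) = u * (e * y) := by
  have h := jordan_linearized h2 e u y
  rw [he.eq, hu, mul_comm (e * y) u, mul_comm (u * y) e, mul_comm y u, mul_comm y e] at h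
  linear_combination (norm := module) h

lemma peirce_polynomial (x : J) :
    e * x + 2 • (e * (e * (e * x))) = 3 • (e * (e * x)) := by
  have h := jordan_linearized h2 e x e
  rw [he.eq, he.eq, mul_comm (e * x) e, mul_comm (e * (e * x)) e] at h
  rw [h]
  abel

lemma peirce1_mul_peirce0 {u v : J} (hu : u ∈ peirce1 e) (hv : v ∈ peirce0 e) : u * v = 0 := by
  have h := mul_assoc_of_mem_peirce0 h2 he hv u
  rwa [hu, mul_left_comm_of_mem_peirce1 h2 he hu, hv, mul_zero] at h

lemma peirce0_mul_peirce1 {v u : J} (hv : v ∈ peirce0 e) (hu : u ∈ peirce1 e) : v * u = 0 := by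
  rw [mul_comm, peirce1_mul_peirce0 h2 he hu hv]

lemma peirce1_mul_peirce1 {u w : J} (hu : u ∈ peirce1 e) (hw : w ∈ peirce1 e) :
    u * w ∈ peirce1 e := by
  rw [mem_peirce1, mul_left_comm_of_mem_peirce1 h2 he hu, hw]

lemma peirce0_mul_peirce0 {v w : J} (hv : v ∈ peirce0 e) (hw : w ∈ peirce0 e) :
    v * w ∈ peirce0 e := by
  rw [mem_peirce0, ← mul_assoc_of_mem_peirce0 h2 he hw, hv, zero_mul]

lemma peirce0_mul_peirceHalf {v q : J} (hv : v ∈ peirce0 e) (hq : q ∈ peirceHalf e) :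
    v * q ∈ peirceHalf e := by
  rw [mem_peirceHalf, mul_comm v, ← mul_assoc_of_mem_peirce0 h2 he hv, ← add_mul, hq]

lemma peirceHalf_mul_peirce1 {q u : J} (hq : q ∈ peirceHalf e) (hu : u ∈ peirce1 e) :
    q * u ∈ peirceHalf e := by
  rw [mem_peirceHalf, mul_comm q, mul_left_comm_of_mem_peirce1 h2 he hu, ← mul_add, hq]

lemma mul_mul_self_mem_peirce1 {x : J} (hx : x ∈ peirceHalf e) : e * (x * x) ∈ peirce1 e := by
  have hx' : 2 • (x * e) = x := by rw [two_nsmul, mul_comm, hx]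
  have h := jordan_linearized h2 x e e
  rw [← smul_mul_assoc, ← smul_mul_assoc, hx', ← smul_mul_assoc (2 : ℕ) (x * e), hx',
    mul_comm (x * e) x, mul_comm e x, add_left_inj, he.eq] at h
  rwa [mem_peirce1, mul_comm e (x * x), mul_comm e]

lemma peirceHalf_mul_peirceHalf {p q : J} (hp : p ∈ peirceHalf e) (hq : q ∈ peirceHalf e) :
    e * (p * q) ∈ peirce1 e := by
  have hpq := mul_mul_self_mem_peirce1 h2 he (add_mem_peirceHalf hp hq)
  rw [mem_peirce1] at hpq ⊢
  apply h2
  simp only [add_mul, mul_add, mul_comm q p, mem_peirce1.1 (mul_mul_self_mem_peirce1 h2 he hp),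
    mem_peirce1.1 (mul_mul_self_mem_peirce1 h2 he hq)] at hpq
  linear_combination (norm := module) hpq

lemma peirce0_mul_peirceHalf_mul_peirceHalf {t p q : J} (ht : t ∈ peirce0 e)
    (hp : p ∈ peirceHalf e) (hq : q ∈ peirceHalf e) : t * (p * q) ∈ peirce0 e := by
  have h := mul_assoc_of_mem_peirce0 h2 he ht (p * q)
  rwa [peirce1_mul_peirce0 h2 he (peirceHalf_mul_peirceHalf h2 he hp hq) ht, eq_comm,
    mul_comm (p * q) t] at h

lemma peirceProj1_mem (x : J) : peirceProj1 e x ∈ peirce1 e := by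
  simp only [mem_peirce1, peirceProj1, mul_sub, mul_smul_comm]
  linear_combination (norm := module) peirce_polynomial h2 he x

lemma peirceProjHalf_mem (x : J) : peirceProjHalf e x ∈ peirceHalf e := by
  simp only [mem_peirceHalf, peirceProjHalf, mul_sub, mul_smul_comm]
  linear_combination (norm := module) (-4 : ℤ) • peirce_polynomial h2 he x

lemma peirceProj0_mem (x : J) : peirceProj0 e x ∈ peirce0 e := by
  simp only [mem_peirce0, peirceProj0, mul_add, mul_sub, mul_smul_comm]
  linear_combination (norm := module) peirce_polynomial h2 he x

lemma eq_zero_of_mem_peirce0 (hH0 : MulSeparates (peirceHalf e) (peirce0 e))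
    (h0H : MulSeparates (peirce0 e) (peirceHalf e)) {x : J} (hx : x ∈ peirce0 e)
    (h : ∀ s ∈ peirceHalf e, ∀ t ∈ peirce0 e, t * (e * (s * x)) = 0) : x = 0 := by
  refine hH0 x hx fun s hs => ?_
  have hsx : s * x ∈ peirceHalf e := mul_comm x s ▸ peirce0_mul_peirceHalf h2 he hx hs
  rw [← hsx, h0H _ (mul_mem_peirceHalf hsx) (h s hs), add_zero]

lemma eq_zero_of_forall_peirce0_mul (hH1 : MulSeparates (peirceHalf e) (peirce1 e))
    (h00 : MulSeparates (peirce0 e) (peirce0 e)) (h0H : MulSeparates (peirce0 e) (peirceHalf e))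
    {x : J} (hx : ∀ t ∈ peirce0 e, t * x = 0) (hex : ∀ t ∈ peirce0 e, t * (e * x) = 0)
    (heex : ∀ t ∈ peirce0 e, t * (e * (e * x)) = 0)
    (hsex : ∀ s ∈ peirceHalf e, ∀ t ∈ peirce0 e, t * (s * (e * x)) = 0)
    (hseex : ∀ s ∈ peirceHalf e, ∀ t ∈ peirce0 e, t * (s * (e * (e * x))) = 0) : x = 0 := by
  have h0 : peirceProj0 e x = 0 := h00 _ (peirceProj0_mem h2 he x) fun t ht => by
    simp only [peirceProj0, mul_add, mul_sub, mul_smul_comm, hx t ht, hex t ht, heex t ht,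
      smul_zero, sub_zero, add_zero]
  have h1 : peirceProj1 e x = 0 := hH1 _ (peirceProj1_mem h2 he x) fun s hs =>
    h0H _ (peirceHalf_mul_peirce1 h2 he hs (peirceProj1_mem h2 he x)) fun t ht => by
      simp only [peirceProj1, mul_sub, mul_smul_comm, hsex s hs t ht, hseex s hs t ht,
        smul_zero, sub_zero]
  have hxHalf : x ∈ peirceHalf e := by
    rw [← peirceProj1_add_peirceProjHalf_add_peirceProj0 e x, h0, h1, zero_add, add_zero]
    exact peirceProjHalf_mem h2 he x
  exact h0H x hxHalf hx

end Jordan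

section Chain
variable [NonUnitalNonAssocRing J]

def lmulChain : List J → J →+ J
  | [] => AddMonoidHom.id J
  | t :: l => (AddMonoidHom.mulLeft t).comp (lmulChain l)

@[simp] lemma lmulChain_nil (x : J) : lmulChain [] x = x := rfl

@[simp] lemma lmulChain_cons (t : J) (l : List J) (x : J) :
    lmulChain (t :: l) x = t * lmulChain l x := rfl

lemma lmulChain_append (l₁ l₂ : List J) (x : J) :
    lmulChain (l₁ ++ l₂) x = lmulChain l₁ (lmulChain l₂ x) := by
  induction l₁ with
  | nil => rfl
  | cons t l ih => rw [List.cons_append, lmulChain_cons, ih, lmulChain_cons]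

lemma lmulChain_eq_zero_of_zero_mem {l : List J} (h : (0 : J) ∈ l) (x : J) :
    lmulChain l x = 0 := by
  induction l with
  | nil => cases h
  | cons t l ih =>
    rcases List.mem_cons.1 h with rfl | h
    · rw [lmulChain_cons, zero_mul]
    · rw [lmulChain_cons, ih h, mul_zero]

lemma rnm_append_singleton (l : List J) (x : J) : rnm (l ++ [x]) = lmulChain l x := by
  induction l with
  | nil => rfl
  | cons t l ih =>
    obtain ⟨y, l', hl⟩ := List.exists_cons_of_ne_nil (List.concat_ne_nil x l)
    rw [List.cons_append, hl, rnm, ← hl, ih, lmulChain_cons]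

lemma eq_zero_of_forall_lmulChain_eq_zero {e : J} (h00 : MulSeparates (peirce0 e) (peirce0 e))
    {x : J} (k : ℕ) (h : ∀ l : List J, l.length = k → lmulChain l x = 0) : x = 0 := by
  induction k with
  | zero => simpa using h [] rfl
  | succ k ih =>
    refine ih fun l hl => h00 _ ?_ fun t _ => ?_
    · simpa using h (e :: l) (by simp [hl])
    · simpa using h (t :: l) (by simp [hl])

def addDefect (D : J → J) (x y : J) : J := D (x + y) - D x - D y

lemma addDefect_comm (D : J → J) (x y : J) : addDefect D x y = addDefect D y x := by
  simp only [addDefect, add_comm x y]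
  abel

variable {m : ℕ} {D : J → J}

lemma IsNDer.map_lmulChain (hD : IsNDer (m + 2) D) {t : List J} (ht : t.length = m + 1)
    (x : J) : D (lmulChain t x) =
      ∑ i ∈ Finset.range (m + 1), lmulChain (t.set i (D (t.getD i 0))) x + lmulChain t (D x) := by
  have h := hD (t ++ [x]) (by simp [ht])
  rw [rnm_append_singleton, Finset.sum_range_succ] at h
  rw [h]
  congr 1
  · refine Finset.sum_congr rfl fun i hi => ?_
    have hi : i < t.length := ht ▸ Finset.mem_range.1 hi
    rw [List.getD_append _ _ _ _ hi, List.set_append, if_pos hi, rnm_append_singleton]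
  · rw [List.getD_append_right _ _ _ _ ht.le, List.set_append, if_neg (by omega), ht,
      Nat.sub_self]
    exact rnm_append_singleton t (D x)

lemma IsNDer.map_zero (hD : IsNDer (m + 2) D) : D 0 = 0 := by
  have h := hD.map_lmulChain (t := List.replicate (m + 1) 0) (by simp) 0
  simpa [lmulChain_eq_zero_of_zero_mem] using h

lemma IsNDer.addDefect_lmulChain (hD : IsNDer (m + 2) D) {t : List J} (ht : t.length = m + 1)
    (x y : J) : addDefect D (lmulChain t x) (lmulChain t y) = lmulChain t (addDefect D x y) := by
  simp only [addDefect, ← map_add, hD.map_lmulChain ht]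
  simp only [map_add, map_sub, Finset.sum_add_distrib]
  abel

lemma IsNDer.addDefect_lmulChain_of_length_eq_mul (hD : IsNDer (m + 2) D) (k : ℕ)
    {t : List J} (ht : t.length = k * (m + 1)) (x y : J) :
    addDefect D (lmulChain t x) (lmulChain t y) = lmulChain t (addDefect D x y) := by
  induction k generalizing t with
  | zero => simp_all
  | succ k ih =>
    rw [← List.take_append_drop (m + 1) t, lmulChain_append, lmulChain_append, lmulChain_append,
      hD.addDefect_lmulChain (by simp [ht]),
      ih (by rw [List.length_drop, ht, Nat.succ_mul, Nat.add_sub_cancel])]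

lemma IsNDer.lmulChain_addDefect_eq_zero {e : J} (h00 : MulSeparates (peirce0 e) (peirce0 e))
    (hD : IsNDer (m + 2) D) {I : List J} {x y : J}
    (h : lmulChain I x = 0 ∨ lmulChain I y = 0) : lmulChain I (addDefect D x y) = 0 := by
  wlog hx : lmulChain I x = 0 generalizing x y
  · rw [addDefect_comm]
    exact this h.symm (h.resolve_left hx)
  refine eq_zero_of_forall_lmulChain_eq_zero h00 (I.length * m) fun W hW => ?_
  rw [← lmulChain_append,
    ← hD.addDefect_lmulChain_of_length_eq_mul I.length (by simp [hW]; ring), lmulChain_append,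
    hx, _root_.map_zero]
  simp [addDefect, hD.map_zero]

end Chain

section Power
variable [NonUnitalNonAssocRing J] {e : J}

lemma lmulChain_replicate_of_mem_peirce1 {u : J} (hu : u ∈ peirce1 e) (k : ℕ) :
    lmulChain (List.replicate k e) u = u := by
  induction k with
  | zero => rfl
  | succ k ih => rw [List.replicate_succ, lmulChain_cons, ih, hu]

lemma lmulChain_replicate_succ_of_mem_peirce0 {v : J} (hv : v ∈ peirce0 e) (k : ℕ) :
    lmulChain (List.replicate (k + 1) e) v = 0 := by
  rw [List.replicate_succ', lmulChain_append, lmulChain_cons, lmulChain_nil, hv, map_zero]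

variable {m : ℕ} {D : J → J}

lemma IsNDer.map_mul_lmulChain_replicate (hD : IsNDer (m + 2) D) (hDe : D e = 0) (x w : J) :
    D (x * lmulChain (List.replicate m e) w) =
      D x * lmulChain (List.replicate m e) w + x * lmulChain (List.replicate m e) (D w) := by
  have h := hD.map_lmulChain (t := x :: List.replicate m e) (by simp) w
  rw [Finset.sum_range_succ', Finset.sum_eq_zero fun i hi => ?_, zero_add] at h
  · simpa using h
  · have hi : i < m := Finset.mem_range.1 hi
    rw [List.getD_cons_succ, List.getD_replicate _ hi, hDe, List.set_cons_succ]
    exact lmulChain_eq_zero_of_zero_mem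
      (List.mem_cons_of_mem _ (List.mem_set (by simpa using hi) 0)) w

end Power

section CommPower
variable [NonUnitalNonAssocCommRing J] {e : J}

lemma lmulChain_replicate_mem_peirceHalf {q : J} (hq : q ∈ peirceHalf e) (k : ℕ) :
    lmulChain (List.replicate k e) q ∈ peirceHalf e := by
  induction k with
  | zero => exact hq
  | succ k ih => exact mul_mem_peirceHalf ih

lemma mem_range_lmulChain_replicate_of_mem_peirce1 {u : J} (hu : u ∈ peirce1 e) (k : ℕ) :
    u ∈ (lmulChain (List.replicate k e)).range :=
  ⟨u, lmulChain_replicate_of_mem_peirce1 hu k⟩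

lemma mem_range_lmulChain_replicate_of_mem_peirceHalf {q : J} (hq : q ∈ peirceHalf e) (k : ℕ) :
    q ∈ (lmulChain (List.replicate k e)).range := by
  induction k generalizing q with
  | zero => exact ⟨q, rfl⟩
  | succ k ih =>
    obtain ⟨w, hw⟩ := ih (add_mem_peirceHalf hq hq)
    exact ⟨w, by rw [List.replicate_succ, lmulChain_cons, hw, mul_add, hq]⟩

lemma lmulChain_replicate_add_self_of_mem_peirceHalf {q : J} (hq : q ∈ peirceHalf e) (k : ℕ) :
    lmulChain (List.replicate k (e + e)) q = q := by
  induction k with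
  | zero => rfl
  | succ k ih => rw [List.replicate_succ, lmulChain_cons, ih, add_self_mul_of_mem_peirceHalf hq]

variable (he : IsIdempotentElem e) {m : ℕ} {D : J → J} (hD : IsNDer (m + 2) D) (hDe : D e = 0)
include he hD hDe

lemma IsNDer.map_mul_left (x : J) : D (e * x) = e * D x := by
  have h := hD.map_mul_lmulChain_replicate hDe x e
  rw [lmulChain_replicate_of_mem_peirce1 he.eq, hDe, _root_.map_zero, mul_zero, add_zero] at h
  rw [mul_comm, h, mul_comm]

lemma IsNDer.map_lmulChain_replicate (k : ℕ) (x : J) :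
    D (lmulChain (List.replicate k e) x) = lmulChain (List.replicate k e) (D x) := by
  induction k with
  | zero => rfl
  | succ k ih =>
    rw [List.replicate_succ, lmulChain_cons, lmulChain_cons, hD.map_mul_left he hDe, ih]

lemma IsNDer.map_mul_of_mem_range {z : J} (hz : z ∈ (lmulChain (List.replicate m e)).range)
    (x : J) : D (x * z) = D x * z + x * D z := by
  obtain ⟨w, rfl⟩ := hz
  rw [hD.map_mul_lmulChain_replicate hDe, hD.map_lmulChain_replicate he hDe]

lemma IsNDer.addDefect_mul_left (x y : J) :
    addDefect D (e * x) (e * y) = e * addDefect D x y := by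
  simp only [addDefect, ← mul_add, hD.map_mul_left he hDe, mul_sub]

include he hD hDe in
lemma IsNDer.addDefect_mem_peirceHalf {a b : J} (ha : a ∈ peirceHalf e) (hb : b ∈ peirceHalf e) :
    addDefect D a b ∈ peirceHalf e := by
  have ha' := lmulChain_replicate_add_self_of_mem_peirceHalf ha
  have hb' := lmulChain_replicate_add_self_of_mem_peirceHalf hb
  set w := lmulChain (List.replicate m (e + e)) (addDefect D a b)
  have hc : addDefect D a b = (e + e) * w := by
    have h := hD.addDefect_lmulChain (t := List.replicate (m + 1) (e + e)) (by simp) a b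
    rwa [ha', hb', List.replicate_succ, lmulChain_cons] at h
  have hec : e * addDefect D a b = e * w := by
    have h := hD.addDefect_lmulChain (t := e :: List.replicate m (e + e)) (by simp) a b
    rwa [lmulChain_cons, lmulChain_cons, ha', hb', hD.addDefect_mul_left he hDe,
      lmulChain_cons] at h
  rw [mem_peirceHalf, hec, ← add_mul, ← hc]

end CommPower

section ChainAnnihilation
variable [NonUnitalNonAssocCommRing J] [IsCommJordan J] {e : J}

lemma eq_zero_of_lmulChain_ann_of_mem_peirce (h2 : IsSMulRegular J 2) (he : IsIdempotentElem e)
    (hH1 : MulSeparates (peirceHalf e) (peirce1 e)) (hH0 : MulSeparates (peirceHalf e) (peirce0 e))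
    (h00 : MulSeparates (peirce0 e) (peirce0 e)) (h0H : MulSeparates (peirce0 e) (peirceHalf e))
    {u v q δ : J} (hu : u ∈ peirce1 e) (hv : v ∈ peirce0 e) (hq : q ∈ peirceHalf e)
    (huv : ∀ I : List J, lmulChain I u = 0 → lmulChain I v = 0 → lmulChain I δ = 0)
    (huq : ∀ I : List J, lmulChain I u = 0 → lmulChain I q = 0 → lmulChain I δ = 0)
    (hvq : ∀ I : List J, lmulChain I v = 0 → lmulChain I q = 0 → lmulChain I δ = 0) :
    δ = 0 := by
  have hEu := lmulChain_replicate_of_mem_peirce1 hu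
  have hEv := lmulChain_replicate_succ_of_mem_peirce0 hv
  have hE : ∀ k, ∀ t ∈ peirce0 e, t * lmulChain (List.replicate (k + 1) e) δ = 0 :=
    fun k t ht => huv (t :: List.replicate (k + 1) e)
      (by rw [lmulChain_cons, hEu, peirce0_mul_peirce1 h2 he ht hu])
      (by rw [lmulChain_cons, hEv, mul_zero])
  have hSE : ∀ k, ∀ s ∈ peirceHalf e, ∀ t ∈ peirce0 e,
      t * (s * lmulChain (List.replicate (k + 1) e) δ) = 0 := by
    intro k s hs t ht
    refine eq_zero_of_mem_peirce0 h2 he hH0 h0H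
      (hvq (e :: t :: s :: List.replicate (k + 1) e) ?_ ?_)
      fun s' hs' t' ht' => huv (t' :: e :: s' :: t :: s :: List.replicate (k + 1) e) ?_ ?_
    · simp only [lmulChain_cons, hEv, mul_zero]
    · exact peirce0_mul_peirceHalf_mul_peirceHalf h2 he ht hs
        (lmulChain_replicate_mem_peirceHalf hq (k + 1))
    · simp only [lmulChain_cons, hEu]
      exact peirce0_mul_peirce1 h2 he ht' (peirceHalf_mul_peirceHalf h2 he hs'
        (peirce0_mul_peirceHalf h2 he ht (peirceHalf_mul_peirce1 h2 he hs hu)))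
    · simp only [lmulChain_cons, hEv, mul_zero]
  refine eq_zero_of_forall_peirce0_mul h2 he hH1 h00 h0H (fun t ht => ?_) (hE 0) (hE 1) (hSE 0)
    (hSE 1)
  refine eq_zero_of_mem_peirce0 h2 he hH0 h0H (huv [e, t] ?_ ?_)
    fun s hs t' ht' => huq [t', e, s, t] ?_ ?_
  · simp only [lmulChain_cons, lmulChain_nil, peirce0_mul_peirce1 h2 he ht hu, mul_zero]
  · exact peirce0_mul_peirce0 h2 he ht hv
  · simp only [lmulChain_cons, lmulChain_nil, peirce0_mul_peirce1 h2 he ht hu, mul_zero]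
  · exact peirce0_mul_peirce1 h2 he ht' (peirceHalf_mul_peirceHalf h2 he hs
      (peirce0_mul_peirceHalf h2 he ht hq))

end ChainAnnihilation

section Additivity
variable [NonUnitalNonAssocCommRing J] [IsCommJordan J] {e : J}
  (h2 : IsSMulRegular J 2) (he : IsIdempotentElem e)
  (hH1 : MulSeparates (peirceHalf e) (peirce1 e)) (hH0 : MulSeparates (peirceHalf e) (peirce0 e))
  (h00 : MulSeparates (peirce0 e) (peirce0 e)) (h0H : MulSeparates (peirce0 e) (peirceHalf e))
  {m : ℕ} {D : J → J} (hD : IsNDer (m + 2) D) (hDe : D e = 0)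

include h2 he hH1 hH0 h00 h0H hD in
lemma IsNDer.map_add_add_of_mem_peirce {u v q : J} (hu : u ∈ peirce1 e) (hv : v ∈ peirce0 e)
    (hq : q ∈ peirceHalf e) : D (u + v + q) = D u + D v + D q := by
  have key : addDefect D u (v + q) + addDefect D v q = 0 := by
    refine eq_zero_of_lmulChain_ann_of_mem_peirce h2 he hH1 hH0 h00 h0H hu hv hq ?_ ?_ ?_ <;>
      intro I h h' <;> rw [map_add]
    · rw [hD.lmulChain_addDefect_eq_zero h00 (.inl h),
        hD.lmulChain_addDefect_eq_zero h00 (.inl h'), add_zero]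
    · rw [hD.lmulChain_addDefect_eq_zero h00 (.inl h),
        hD.lmulChain_addDefect_eq_zero h00 (.inr h'), add_zero]
    · rw [hD.lmulChain_addDefect_eq_zero h00 (.inr (by rw [map_add, h, h', add_zero])),
        hD.lmulChain_addDefect_eq_zero h00 (.inl h), add_zero]
  rw [← sub_eq_zero, ← key]
  simp only [addDefect, add_assoc]
  abel

include h2 he hH1 hH0 h00 h0H hD in
lemma IsNDer.map_add_of_mem_peirce1_of_mem_peirceHalf {u q : J} (hu : u ∈ peirce1 e)
    (hq : q ∈ peirceHalf e) : D (u + q) = D u + D q := by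
  simpa [hD.map_zero] using
    hD.map_add_add_of_mem_peirce h2 he hH1 hH0 h00 h0H hu (mul_zero e) hq

include h2 he hH1 hH0 h00 h0H hD in
lemma IsNDer.map_add_of_mem_peirce1_of_mem_peirce0 {u v : J} (hu : u ∈ peirce1 e)
    (hv : v ∈ peirce0 e) : D (u + v) = D u + D v := by
  simpa [hD.map_zero] using
    hD.map_add_add_of_mem_peirce h2 he hH1 hH0 h00 h0H hu hv (q := 0) (by simp)

include h2 he hH1 hH0 h00 h0H hD hDe in
lemma IsNDer.addDefect_eq_neg_addDefect {f a b : J} (hf : f ∈ peirce1 e) (hfa : f * a = a)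
    (hfb : f * b = b) (ha : a ∈ peirceHalf e) (hb : b ∈ peirceHalf e) :
    addDefect D a b = -addDefect D (f * f) (e * (a * b)) := by
  have hff : f * f ∈ peirce1 e := peirce1_mul_peirce1 h2 he hf hf
  have hleib := fun (x : J) {z : J} (hz : z ∈ (lmulChain (List.replicate m e)).range) =>
    hD.map_mul_of_mem_range he hDe hz x
  have rf := mem_range_lmulChain_replicate_of_mem_peirce1 hf m
  have rb := mem_range_lmulChain_replicate_of_mem_peirceHalf hb m
  have hadd := fun {u q : J} (hu : u ∈ peirce1 e) (hq : q ∈ peirceHalf e) =>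
    hD.map_add_of_mem_peirce1_of_mem_peirceHalf h2 he hH1 hH0 h00 h0H hu hq
  have key :
      D ((f + a) * (f + b)) - D ((f + a) * f) - D (f * (f + b)) + D (f * f) = D (a * b) := by
    rw [hleib _ (add_mem rf rb), hleib _ rf, hleib _ (add_mem rf rb), hleib _ rf, hleib _ rb,
      hadd hf ha, hadd hf hb]
    simp only [add_mul, mul_add]
    abel
  have hm₁ : e * (a * b) ∈ peirce1 e := peirceHalf_mul_peirceHalf h2 he ha hb
  have hm₀ : a * b - e * (a * b) ∈ peirce0 e := by rw [mem_peirce0, mul_sub, hm₁, sub_self]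
  have hab := hD.map_add_of_mem_peirce1_of_mem_peirce0 h2 he hH1 hH0 h00 h0H hm₁ hm₀
  rw [add_sub_cancel] at hab
  rw [show (f + a) * (f + b) = f * f + e * (a * b) + (a * b - e * (a * b)) + (a + b) by
      rw [mul_add, add_mul, add_mul, mul_comm a f, hfa, hfb]; abel,
    show (f + a) * f = f * f + a by rw [add_mul, mul_comm a f, hfa],
    show f * (f + b) = f * f + b by rw [mul_add, hfb],
    hD.map_add_add_of_mem_peirce h2 he hH1 hH0 h00 h0H (add_mem_peirce1 hff hm₁) hm₀
      (add_mem_peirceHalf ha hb), hadd hff ha, hadd hff hb, hab] at key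
  simp only [addDefect]
  linear_combination (norm := module) key

include h2 he hH1 hH0 h00 h0H hD hDe in
lemma IsNDer.addDefect_eq_zero_of_mem_peirceHalf {a b : J} (ha : a ∈ peirceHalf e)
    (hb : b ∈ peirceHalf e) : addDefect D a b = 0 := by
  have hf : e + e ∈ peirce1 e := add_mem_peirce1 he.eq he.eq
  refine h0H _ (hD.addDefect_mem_peirceHalf he hDe ha hb) fun t ht => ?_
  have h := hD.lmulChain_addDefect_eq_zero h00 (I := [t]) (x := (e + e) * (e + e))
    (y := e * (a * b)) (.inl (peirce0_mul_peirce1 h2 he ht (peirce1_mul_peirce1 h2 he hf hf)))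
  rw [lmulChain_cons, lmulChain_nil] at h
  rw [hD.addDefect_eq_neg_addDefect h2 he hH1 hH0 h00 h0H hDe hf (add_self_mul_of_mem_peirceHalf ha)
    (add_self_mul_of_mem_peirceHalf hb) ha hb, mul_neg, h, neg_zero]

end Additivity

end

theorem nDer_additive_on_half_general {n : ℕ} (hn : 2 ≤ n) {J : Type*} [NonUnitalNonAssocCommRing J]
    (hJordan : ∀ x y : J, ((x * x) * y) * x = (x * x) * (y * x))
    (h2 : ∀ x : J, x + x = 0 → x = 0)
    (e : J) (hid : e * e = e)
    (hcond1 : ∀ a ∈ peirce1 e, (∀ t ∈ peirceHalf e, t * a = 0) → a = 0)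
    (hcond1' : ∀ a ∈ peirce0 e, (∀ t ∈ peirceHalf e, t * a = 0) → a = 0)
    (hcond2 : ∀ a ∈ peirce0 e, (∀ t ∈ peirce0 e, t * a = 0) → a = 0)
    (hcond3 : ∀ a ∈ peirceHalf e, (∀ t ∈ peirce0 e, t * a = 0) → a = 0)
    (D : J → J) (hder : IsNDer n D) (hDe : D e = 0) :
    ∀ a ∈ peirceHalf e, ∀ b ∈ peirceHalf e, D (a + b) = D a + D b := by
  obtain ⟨m, rfl⟩ : ∃ m, n = m + 2 := ⟨n - 2, by omega⟩
  have : IsCommJordan J := ⟨fun x y => by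
    rw [mul_comm (x * y), mul_comm x y, ← hJordan, mul_comm _ x, mul_comm (x * x) y]⟩
  have h2' : IsSMulRegular J 2 := fun x y (hxy : 2 • x = 2 • y) =>
    sub_eq_zero.1 (h2 _ (by rw [← two_nsmul, smul_sub, hxy, sub_self]))
  intro a ha b hb
  have h :=
    hder.addDefect_eq_zero_of_mem_peirceHalf h2' hid hcond1 hcond1' hcond2 hcond3 hDe ha hb
  rwa [addDefect, sub_sub, sub_eq_zero] at h

theorem nDer_additive_on_half {n : ℕ} (hn : 2 ≤ n) {J : Type*} [NonUnitalNonAssocCommRing J]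
    (hJordan : ∀ x y : J, ((x * x) * y) * x = (x * x) * (y * x))
    (h2 : ∀ x : J, x + x = 0 → x = 0)
    (hn1 : ∀ x : J, (n - 1) • x = 0 → x = 0)
    (e : J) (hid : e * e = e) (hne : e ≠ 0) (hnu : ∃ x : J, e * x ≠ x)
    (hcond1 : ∀ a ∈ peirce1 e, (∀ t ∈ peirceHalf e, t * a = 0) → a = 0)
    (hcond1' : ∀ a ∈ peirce0 e, (∀ t ∈ peirceHalf e, t * a = 0) → a = 0)
    (hcond2 : ∀ a ∈ peirce0 e, (∀ t ∈ peirce0 e, t * a = 0) → a = 0)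
    (hcond3 : ∀ a ∈ peirceHalf e, (∀ t ∈ peirce0 e, t * a = 0) → a = 0)
    (D : J → J) (hder : IsNDer n D) (hDe : D e = 0) :
    ∀ a ∈ peirceHalf e, ∀ b ∈ peirceHalf e, D (a + b) = D a + D b :=
  nDer_additive_on_half_general hn hJordan h2 e hid hcond1 hcond1' hcond2 hcond3 D hder hDe
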